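/- Let (a_n) be an arithmetic sequence and B ⊆ ℕ. There exists x ∈ 𝕋 with supp(x) ⊆ B and x ∉ t^{f,g}_{(a_n)}(𝕋) if and only if B has positive upper f-density of weight g. -/

import Mathlib

/-!
If `supp x ⊆ B` and `‖a_m x‖ ≥ ε > 2⁻ᵏ`, one of the digits `c_{m+1}, …, c_{m+k}` is nonzero,
since after `k` zero digits `a_m x` is congruent to a tail of size at most `a_m / a_{m+k} ≤ 2⁻ᵏ`.
So the set of such `m` lies in `⋃_{j ≤ k} (B - j)`, which has zero density if `B` has.

Conversely, if `B` has positive density, then by subadditivity of `f` so has one of its parity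
classes `P`. Putting the digit `⌊q_n / 2⌋` at every `n ∈ P` gives `‖a_m x‖ ≥ 1/4` whenever
`m + 1 ∈ P`, and `P - 1` has positive density too.
-/

open Filter Set

/-- A modulus function: nonnegative, vanishing exactly at 0, subadditive,
non-decreasing, right continuous at 0 (all on `[0,∞)`). -/
def IsModulus (f : ℝ → ℝ) : Prop :=
  (∀ x : ℝ, 0 ≤ x → 0 ≤ f x) ∧
  (∀ x : ℝ, 0 ≤ x → (f x = 0 ↔ x = 0)) ∧
  (∀ x y : ℝ, 0 ≤ x → 0 ≤ y → f (x + y) ≤ f x + f y) ∧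
  (∀ x y : ℝ, 0 ≤ x → x ≤ y → f x ≤ f y) ∧
  ContinuousWithinAt f (Set.Ici 0) 0

/-- An unbounded modulus function. -/
def IsUnboundedModulus (f : ℝ → ℝ) : Prop :=
  IsModulus f ∧ Tendsto f atTop atTop

/-- A weight function `g : ℕ → [0,∞)` with `g n → ∞` and `n / g n ↛ 0`. -/
def IsWeight (g : ℕ → ℝ) : Prop :=
  (∀ n, 0 ≤ g n) ∧ Tendsto g atTop atTop ∧
  ¬ Tendsto (fun n : ℕ => (n : ℝ) / g n) atTop (nhds 0)

open scoped Classical in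
/-- `|A ∩ [1,n]|`. -/
noncomputable def cnt (A : Set ℕ) (n : ℕ) : ℕ :=
  ((Finset.Icc 1 n).filter (fun m => m ∈ A)).card

/-- The ideal `𝒵_g(f)` of sets whose `f`-density of weight `g` is zero
(for nonnegative sequences, `limsup = 0` is equivalent to convergence to `0`). -/
noncomputable def Zd (f : ℝ → ℝ) (g : ℕ → ℝ) : Set (Set ℕ) :=
  {A | Tendsto (fun n => f (cnt A n) / f (g n)) atTop (nhds 0)}

/-- The `f^g`-statistically characterized subgroup `t^{f,g}_{(a_n)}(𝕋)`. -/
noncomputable def statChar (f : ℝ → ℝ) (g : ℕ → ℝ) (a : ℕ → ℤ) :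
    Set (AddCircle (1 : ℝ)) :=
  {x | ∀ ε > 0, {n : ℕ | ε ≤ ‖(a n) • x‖} ∈ Zd f g}

/-- An arithmetic sequence: `a 0 = 1`, strictly increasing, `a n ∣ a (n+1)`,
and all ratios `q_n ≥ 2`. -/
def IsArith (a : ℕ → ℕ) : Prop :=
  a 0 = 1 ∧ StrictMono a ∧ (∀ n, a n ∣ a (n + 1)) ∧ (∀ n, 2 * a n ≤ a (n + 1))

/-- Canonical representation `x = Σ_{n≥1} c_n / a_n` with `0 ≤ c_n ≤ q_n - 1`
and `c_n < q_n - 1` infinitely often; here `q_n = a n / a (n-1)`. -/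
def IsCanonRep (a : ℕ → ℕ) (c : ℕ → ℕ) (x : AddCircle (1 : ℝ)) : Prop :=
  c 0 = 0 ∧ (∀ n, 1 ≤ n → c n ≤ a n / a (n - 1) - 1) ∧
  (∀ N, ∃ n, N ≤ n ∧ c n < a n / a (n - 1) - 1) ∧
  x = ((∑' n, (c n : ℝ) / (a n : ℝ) : ℝ) : AddCircle (1 : ℝ))

namespace IsArith

variable {a : ℕ → ℕ} (ha : IsArith a)
include ha

lemma pos (n : ℕ) : 0 < a n := by
  have := ha.2.1.monotone n.zero_le
  have := ha.1
  omega

lemma cast_pos (n : ℕ) : (0 : ℝ) < a n := by exact_mod_cast ha.pos n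

lemma dvd_of_le {m n : ℕ} (h : m ≤ n) : a m ∣ a n := by
  induction n, h using Nat.le_induction with
  | base => exact dvd_rfl
  | succ n _ ih => exact ih.trans (ha.2.2.1 n)

lemma mul_two_pow_le (m k : ℕ) : a m * 2 ^ k ≤ a (m + k) := by
  induction k with
  | zero => simp
  | succ k ih =>
    calc a m * 2 ^ (k + 1) = a m * 2 ^ k * 2 := by ring
      _ ≤ a (m + k) * 2 := Nat.mul_le_mul_right 2 ih
      _ ≤ a (m + k + 1) := by linarith [ha.2.2.2 (m + k)]

lemma two_le_ratio (n : ℕ) : 2 ≤ a (n + 1) / a n :=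
  (Nat.le_div_iff_mul_le (ha.pos n)).2 (by linarith [ha.2.2.2 n])

lemma ratio_mul (n : ℕ) : a (n + 1) / a n * a n = a (n + 1) :=
  Nat.div_mul_cancel (ha.2.2.1 n)

lemma div_le_half_pow (m k : ℕ) : (a m : ℝ) / a (m + k) ≤ (1 / 2) ^ k := by
  have h : (a m : ℝ) * 2 ^ k ≤ a (m + k) := by exact_mod_cast ha.mul_two_pow_le m k
  rw [div_le_iff₀ (ha.cast_pos _), one_div_pow, div_mul_eq_mul_div, le_div_iff₀ (by positivity)]
  linarith

end IsArith

lemma AddCircle.norm_coe_one_le_abs (y : ℝ) : ‖(y : AddCircle (1 : ℝ))‖ ≤ |y| :=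
  QuotientAddGroup.norm_mk_le_norm

lemma AddCircle.quarter_le_norm_coe_one {y : ℝ} (h₁ : 1 / 4 ≤ y) (h₂ : y ≤ 3 / 4) :
    1 / 4 ≤ ‖(y : AddCircle (1 : ℝ))‖ := by
  rw [UnitAddCircle.norm_eq]
  rcases le_or_gt (round y) 0 with h | h
  · have : (round y : ℝ) ≤ 0 := by exact_mod_cast h
    rw [abs_of_nonneg (by linarith)]
    linarith
  · have : (1 : ℝ) ≤ round y := by exact_mod_cast h
    rw [abs_of_nonpos (by linarith)]
    linarith

lemma AddCircle.coe_one_intCast_add (K : ℤ) (y : ℝ) :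
    ((K + y : ℝ) : AddCircle (1 : ℝ)) = y := by
  rw [AddCircle.coe_add, add_eq_right, AddCircle.coe_eq_zero_iff]
  exact ⟨K, by simp⟩

noncomputable def circleOfDigits (a c : ℕ → ℕ) : AddCircle (1 : ℝ) :=
  ((∑' n, (c n : ℝ) / (a n : ℝ) : ℝ) : AddCircle (1 : ℝ))

noncomputable def tail (a c : ℕ → ℕ) (N : ℕ) : ℝ :=
  ∑' m, (c (m + (N + 1)) : ℝ) / a (m + (N + 1))

lemma tail_nonneg (a c : ℕ → ℕ) (N : ℕ) : 0 ≤ tail a c N :=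
  tsum_nonneg fun _ => by positivity

section Digits

variable {a c : ℕ → ℕ} (ha : IsArith a) (hc : ∀ n, c (n + 1) ≤ a (n + 1) / a n - 1)
include ha hc

lemma digit_div_le (n : ℕ) : (c (n + 1) : ℝ) / a (n + 1) ≤ 1 / a n - 1 / a (n + 1) := by
  have hnat : (c (n + 1) + 1) * a n ≤ a (n + 1) := by
    calc (c (n + 1) + 1) * a n ≤ a (n + 1) / a n * a n := by
          have := ha.two_le_ratio n
          have := hc n
          gcongr
          omega
      _ = a (n + 1) := ha.ratio_mul n
  have hreal : ((c (n + 1) : ℝ) + 1) * a n ≤ a (n + 1) := by exact_mod_cast hnat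
  have hsucc : ((c (n + 1) : ℝ) + 1) / a (n + 1) ≤ 1 / a n := by
    rw [div_le_div_iff₀ (ha.cast_pos _) (ha.cast_pos _)]
    linarith
  rw [add_div] at hsucc
  linarith

lemma summable_digits : Summable fun n => (c n : ℝ) / a n := by
  refine (summable_nat_add_iff 1).1 (Summable.of_nonneg_of_le (fun _ => by positivity)
    (fun n => ?_) (summable_geometric_two))
  calc (c (n + 1) : ℝ) / a (n + 1) ≤ 1 / a n := by
        linarith [digit_div_le ha hc n, one_div_pos.2 (ha.cast_pos (n + 1))]
    _ ≤ (1 / 2) ^ n := by simpa [ha.1] using ha.div_le_half_pow 0 n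

lemma tail_le (N : ℕ) : tail a c N ≤ 1 / a N := by
  refine ((summable_nat_add_iff (N + 1)).2 (summable_digits ha hc)).tsum_le_of_sum_le fun s => ?_
  obtain ⟨M, hM⟩ := s.exists_nat_subset_range
  calc ∑ m ∈ s, (c (m + (N + 1)) : ℝ) / a (m + (N + 1))
      ≤ ∑ m ∈ Finset.range M, (c (m + (N + 1)) : ℝ) / a (m + (N + 1)) :=
        Finset.sum_le_sum_of_subset_of_nonneg hM fun _ _ _ => by positivity
    _ ≤ ∑ m ∈ Finset.range M, (1 / (a (N + m) : ℝ) - 1 / a (N + m + 1)) :=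
        Finset.sum_le_sum fun m _ => by
          simpa only [show m + (N + 1) = N + m + 1 by omega] using digit_div_le ha hc (N + m)
    _ = 1 / a N - 1 / a (N + M) := Finset.sum_range_sub' (fun i => 1 / (a (N + i) : ℝ)) M
    _ ≤ 1 / a N := by linarith [one_div_pos.2 (ha.cast_pos (N + M))]

lemma tail_eq_add (N : ℕ) : tail a c N = c (N + 1) / a (N + 1) + tail a c (N + 1) := by
  rw [tail, ((summable_nat_add_iff (N + 1)).2 (summable_digits ha hc)).tsum_eq_zero_add, tail]
  simp only [zero_add, add_assoc, add_comm 1]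

lemma tail_eq_of_digits_eq_zero (N k : ℕ) (h : ∀ j ∈ Finset.Icc 1 k, c (N + j) = 0) :
    tail a c N = tail a c (N + k) := by
  induction k with
  | zero => rfl
  | succ k ih =>
    have hzero : c (N + k + 1) = 0 := h (k + 1) (by simp)
    rw [ih fun j hj => h j (by simp at hj ⊢; omega), tail_eq_add ha hc (N + k), hzero]
    simp [add_assoc]

/-- The first `N + 1` terms contribute an integer, as `a m ∣ a N` for `m ≤ N`. -/
lemma zsmul_circleOfDigits (N : ℕ) :
    (a N : ℤ) • circleOfDigits a c = ((a N * tail a c N : ℝ) : AddCircle (1 : ℝ)) := by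
  have hsplit := (summable_digits ha hc).sum_add_tsum_nat_add (N + 1)
  have hint : (a N : ℝ) * ∑ m ∈ Finset.range (N + 1), (c m : ℝ) / a m
      = ((∑ m ∈ Finset.range (N + 1), c m * (a N / a m) : ℕ) : ℤ) := by
    rw [Int.cast_natCast, Nat.cast_sum, Finset.mul_sum]
    refine Finset.sum_congr rfl fun m hm => ?_
    rw [Nat.cast_mul,
      Nat.cast_div (ha.dvd_of_le (Finset.mem_range_succ_iff.1 hm)) (ha.cast_pos m).ne']
    ring
  rw [circleOfDigits, ← AddCircle.coe_zsmul, zsmul_eq_mul, ← hsplit, Int.cast_natCast,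
    mul_add, hint, AddCircle.coe_one_intCast_add]
  rfl

lemma norm_zsmul_circleOfDigits_le (N k : ℕ) (h : ∀ j ∈ Finset.Icc 1 k, c (N + j) = 0) :
    ‖(a N : ℤ) • circleOfDigits a c‖ ≤ (1 / 2) ^ k := by
  rw [zsmul_circleOfDigits ha hc, tail_eq_of_digits_eq_zero ha hc N k h]
  have hN := ha.cast_pos N
  calc _ ≤ |(a N : ℝ) * tail a c (N + k)| := AddCircle.norm_coe_one_le_abs _
    _ = a N * tail a c (N + k) := abs_of_nonneg (by have := tail_nonneg a c (N + k); positivity)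
    _ ≤ a N * (1 / a (N + k)) := by gcongr; exact tail_le ha hc _
    _ ≤ (1 / 2) ^ k := by rw [mul_one_div]; exact ha.div_le_half_pow N k

/-- Here the lift `a N * tail a c N` lies in `[1/3, 3/4]`. -/
lemma quarter_le_norm_zsmul_circleOfDigits (N : ℕ) (h₁ : c (N + 1) = a (N + 1) / a N / 2)
    (h₂ : c (N + 2) = 0) : 1 / 4 ≤ ‖(a N : ℤ) • circleOfDigits a c‖ := by
  set q := a (N + 1) / a N
  have hq : 2 ≤ q := ha.two_le_ratio N
  have hq' : (0 : ℝ) < q := by exact_mod_cast (show 0 < q by omega)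
  have hqa : (q : ℝ) * a N = a (N + 1) := by exact_mod_cast ha.ratio_mul N
  have hdigit : (a N : ℝ) * (c (N + 1) / a (N + 1)) = (q / 2 : ℕ) / q := by
    rw [h₁, ← hqa]
    field_simp [(ha.cast_pos N).ne']
  have hlow : (1 / 3 : ℝ) ≤ (q / 2 : ℕ) / q := by
    rw [div_le_div_iff₀ (by norm_num) hq']
    have : (q : ℝ) ≤ 3 * (q / 2 : ℕ) := by exact_mod_cast (show q ≤ 3 * (q / 2) by omega)
    linarith
  have hhigh : ((q / 2 : ℕ) : ℝ) / q ≤ 1 / 2 := by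
    rw [div_le_div_iff₀ hq' (by norm_num)]
    have : 2 * ((q / 2 : ℕ) : ℝ) ≤ q := by exact_mod_cast (show 2 * (q / 2) ≤ q by omega)
    linarith
  have hrest : (a N : ℝ) * tail a c (N + 2) ≤ 1 / 4 :=
    calc (a N : ℝ) * tail a c (N + 2) ≤ a N * (1 / a (N + 2)) := by
          gcongr; exact tail_le ha hc _
      _ ≤ 1 / 4 := by rw [mul_one_div]; linarith [ha.div_le_half_pow N 2]
  have hrest' : 0 ≤ (a N : ℝ) * tail a c (N + 2) := by
    have := tail_nonneg a c (N + 2); have := ha.cast_pos N; positivity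
  have htail : tail a c N = c (N + 1) / a (N + 1) + tail a c (N + 2) := by
    rw [tail_eq_add ha hc N, tail_eq_add ha hc (N + 1), h₂]
    simp
  rw [zsmul_circleOfDigits ha hc, htail, mul_add, hdigit]
  exact AddCircle.quarter_le_norm_coe_one (by linarith) (by linarith)

end Digits

section Counting

open scoped Classical

lemma cnt_empty (n : ℕ) : cnt ∅ n = 0 := by simp [cnt]

lemma cnt_mono {A A' : Set ℕ} (h : A ⊆ A') (n : ℕ) : cnt A n ≤ cnt A' n :=
  Finset.card_le_card (Finset.monotone_filter_right _ fun _ _ hm => h hm)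

lemma cnt_union_le (A A' : Set ℕ) (n : ℕ) : cnt (A ∪ A') n ≤ cnt A n + cnt A' n := by
  unfold cnt
  simp only [Set.mem_union, Finset.filter_or]
  exact Finset.card_union_le _ _

lemma cnt_preimage_add_le (A : Set ℕ) (j n : ℕ) : cnt {m | m + j ∈ A} n ≤ cnt A n + j := by
  unfold cnt
  calc _ ≤ ((Finset.Icc 1 n).filter (· ∈ A) ∪ Finset.Ioc n (n + j)).card := by
        refine Finset.card_le_card_of_injOn (· + j) (fun m hm => ?_) (fun _ _ _ _ => by simp)
        simp only [Finset.coe_filter, Finset.mem_Icc, Set.mem_ofPred_eq] at hm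
        obtain ⟨⟨hm1, hmn⟩, hmA⟩ := hm
        simp only [Finset.coe_union, Finset.coe_filter, Finset.coe_Ioc, Set.mem_union,
          Set.mem_ofPred_eq, Finset.mem_Icc, Set.mem_Ioc]
        rcases le_or_gt (m + j) n with hle | hlt
        · exact Or.inl ⟨⟨by omega, hle⟩, hmA⟩
        · exact Or.inr ⟨hlt, by omega⟩
    _ ≤ _ := by
        refine (Finset.card_union_le _ _).trans ?_
        simp

lemma cnt_le_cnt_preimage_add (A : Set ℕ) (j n : ℕ) : cnt A n ≤ cnt {m | m + j ∈ A} n + j := by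
  unfold cnt
  calc _ ≤ (((Finset.Icc 1 n).filter (· ∈ {m | m + j ∈ A})).image (· + j) ∪
        Finset.Icc 1 j).card := by
        refine Finset.card_le_card fun m hm => ?_
        simp only [Finset.mem_filter, Finset.mem_Icc] at hm
        obtain ⟨⟨hm1, hmn⟩, hmA⟩ := hm
        simp only [Finset.mem_union, Finset.mem_image, Finset.mem_filter, Finset.mem_Icc,
          Set.mem_ofPred_eq]
        by_cases hmj : m ≤ j
        · exact Or.inr ⟨hm1, hmj⟩
        · exact Or.inl ⟨m - j, ⟨⟨by omega, by omega⟩, by rwa [Nat.sub_add_cancel (by omega)]⟩,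
            by omega⟩
    _ ≤ _ := by
        refine (Finset.card_union_le _ _).trans ?_
        simpa using Finset.card_image_le

end Counting

namespace IsModulus

variable {f : ℝ → ℝ} (hf : IsModulus f)
include hf

lemma nonneg {x : ℝ} (hx : 0 ≤ x) : 0 ≤ f x := hf.1 x hx

lemma map_zero : f 0 = 0 := (hf.2.1 0 le_rfl).2 rfl

lemma add_le {x y : ℝ} (hx : 0 ≤ x) (hy : 0 ≤ y) : f (x + y) ≤ f x + f y := hf.2.2.1 x y hx hy

lemma mono {x y : ℝ} (hx : 0 ≤ x) (hxy : x ≤ y) : f x ≤ f y := hf.2.2.2.1 x y hx hxy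

lemma natCast_add_le {m n k : ℕ} (h : m ≤ n + k) : f m ≤ f n + f k :=
  (hf.mono m.cast_nonneg (by exact_mod_cast h : (m : ℝ) ≤ n + k)).trans
    (by exact_mod_cast hf.add_le n.cast_nonneg k.cast_nonneg)

end IsModulus

section ZeroDensity

variable {f : ℝ → ℝ} {g : ℕ → ℝ}

lemma mem_Zd_of_le (hf : IsModulus f) (hg : ∀ n, 0 ≤ g n) {A : Set ℕ} {u : ℕ → ℝ}
    (h : ∀ n, f (cnt A n) ≤ u n) (hu : Tendsto (fun n => u n / f (g n)) atTop (nhds 0)) :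
    A ∈ Zd f g :=
  squeeze_zero (fun n => div_nonneg (hf.nonneg (Nat.cast_nonneg _)) (hf.nonneg (hg n)))
    (fun n => div_le_div_of_nonneg_right (h n) (hf.nonneg (hg n))) hu

lemma empty_mem_Zd (hf : IsModulus f) : ∅ ∈ Zd f g := by
  simp [Zd, cnt_empty, hf.map_zero]

variable (hf : IsUnboundedModulus f) (hg : IsWeight g)
include hf hg

lemma union_mem_Zd {A A' : Set ℕ} (hA : A ∈ Zd f g) (hA' : A' ∈ Zd f g) : A ∪ A' ∈ Zd f g :=
  mem_Zd_of_le hf.1 hg.1 (fun n => hf.1.natCast_add_le (cnt_union_le A A' n))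
    (by simpa only [add_div, add_zero] using hA.add hA')

lemma biUnion_mem_Zd {ι : Type*} (s : Finset ι) {A : ι → Set ℕ} (h : ∀ i ∈ s, A i ∈ Zd f g) :
    ⋃ i ∈ s, A i ∈ Zd f g := by
  classical
  induction s using Finset.induction_on with
  | empty => simpa using empty_mem_Zd hf.1
  | insert i s _ ih =>
    rw [Finset.set_biUnion_insert]
    exact union_mem_Zd hf hg (h i (by simp)) (ih fun j hj => h j (by simp [hj]))

lemma mem_Zd_of_cnt_le_add {A A' : Set ℕ} (C : ℕ) (h : ∀ n, cnt A n ≤ cnt A' n + C)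
    (hA' : A' ∈ Zd f g) : A ∈ Zd f g :=
  mem_Zd_of_le hf.1 hg.1 (fun n => hf.1.natCast_add_le (h n))
    (by simpa only [add_div, add_zero, Function.comp_apply] using
      hA'.add (tendsto_const_nhds.div_atTop (hf.2.comp hg.2.1)))

lemma mem_Zd_of_subset {A A' : Set ℕ} (h : A ⊆ A') (hA' : A' ∈ Zd f g) : A ∈ Zd f g :=
  mem_Zd_of_cnt_le_add hf hg 0 (cnt_mono h) hA'

lemma preimage_add_mem_Zd {A : Set ℕ} (hA : A ∈ Zd f g) (j : ℕ) : {m | m + j ∈ A} ∈ Zd f g :=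
  mem_Zd_of_cnt_le_add hf hg j (cnt_preimage_add_le A j) hA

lemma mem_Zd_of_preimage_add_mem {A : Set ℕ} {j : ℕ} (hA : {m | m + j ∈ A} ∈ Zd f g) :
    A ∈ Zd f g :=
  mem_Zd_of_cnt_le_add hf hg j (cnt_le_cnt_preimage_add A j) hA

end ZeroDensity

lemma mem_statChar_of_support_subset {f : ℝ → ℝ} {g : ℕ → ℝ} {a c : ℕ → ℕ} {B : Set ℕ}
    (hf : IsUnboundedModulus f) (hg : IsWeight g) (ha : IsArith a)
    (hc : ∀ n, c (n + 1) ≤ a (n + 1) / a n - 1) (hsupp : {n | c n ≠ 0} ⊆ B)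
    (hB : B ∈ Zd f g) : circleOfDigits a c ∈ statChar f g (fun n => (a n : ℤ)) := by
  intro ε hε
  obtain ⟨k, hk⟩ := exists_pow_lt_of_lt_one hε (by norm_num : (1 / 2 : ℝ) < 1)
  refine mem_Zd_of_subset hf hg (fun m hm => ?_)
    (biUnion_mem_Zd hf hg (Finset.Icc 1 k) fun j _ => preimage_add_mem_Zd hf hg hB j)
  by_contra hnot
  simp only [Set.mem_iUnion, Set.mem_ofPred_eq, exists_prop, not_exists, not_and] at hnot
  have hzero : ∀ j ∈ Finset.Icc 1 k, c (m + j) = 0 := fun j hj =>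
    not_not.1 fun hne => hnot j hj (hsupp hne)
  have : ε ≤ ‖(a m : ℤ) • circleOfDigits a c‖ := hm
  linarith [norm_zsmul_circleOfDigits_le ha hc m k hzero]

lemma exists_nonconsecutive_subset_notMem_Zd {f : ℝ → ℝ} {g : ℕ → ℝ} {B : Set ℕ}
    (hf : IsUnboundedModulus f) (hg : IsWeight g) (hB : B ∉ Zd f g) :
    ∃ P ⊆ B, (∀ n ∈ P, n + 1 ∉ P) ∧ P ∉ Zd f g := by
  by_contra! h
  apply hB
  rw [← Set.inter_union_compl B {n | Even n}]
  refine union_mem_Zd hf hg (h _ Set.inter_subset_left fun n hn hn1 => ?_)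
    (h _ Set.inter_subset_left fun n hn hn1 => ?_)
  · exact Nat.even_add_one.1 hn1.2 hn.2
  · exact hn1.2 (Nat.even_add_one.2 hn.2)

open scoped Classical in
noncomputable def halfDigits (a : ℕ → ℕ) (P : Set ℕ) : ℕ → ℕ
  | 0 => 0
  | n + 1 => if n + 1 ∈ P then a (n + 1) / a n / 2 else 0

section HalfDigits

variable {a : ℕ → ℕ} {P : Set ℕ}

lemma halfDigits_succ_of_mem {n : ℕ} (h : n + 1 ∈ P) :
    halfDigits a P (n + 1) = a (n + 1) / a n / 2 := by
  simp [halfDigits, h]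

lemma halfDigits_succ_of_notMem {n : ℕ} (h : n + 1 ∉ P) : halfDigits a P (n + 1) = 0 := by
  simp [halfDigits, h]

lemma support_halfDigits_subset (a : ℕ → ℕ) (P : Set ℕ) : {n | halfDigits a P n ≠ 0} ⊆ P := by
  rintro (_ | n) hn
  · exact absurd rfl hn
  · by_contra h
    exact hn (halfDigits_succ_of_notMem h)

lemma halfDigits_succ_le (ha : IsArith a) (P : Set ℕ) (n : ℕ) :
    halfDigits a P (n + 1) ≤ a (n + 1) / a n - 1 := by
  have := ha.two_le_ratio n
  by_cases h : n + 1 ∈ P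
  · rw [halfDigits_succ_of_mem h]; omega
  · rw [halfDigits_succ_of_notMem h]; omega

lemma isCanonRep_halfDigits (ha : IsArith a) (hP : ∀ n ∈ P, n + 1 ∉ P) :
    IsCanonRep a (halfDigits a P) (circleOfDigits a (halfDigits a P)) := by
  refine ⟨rfl, fun n hn => ?_, fun N => ?_, rfl⟩
  · obtain ⟨m, rfl⟩ := Nat.exists_eq_add_of_le' hn
    simpa using halfDigits_succ_le ha P m
  · have hzero : ∀ n, n + 1 ∉ P → halfDigits a P (n + 1) < a (n + 1) / a (n + 1 - 1) - 1 :=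
      fun n h => by
        rw [halfDigits_succ_of_notMem h, Nat.add_sub_cancel]
        have := ha.two_le_ratio n
        omega
    by_cases hN : N + 1 ∈ P
    · exact ⟨N + 2, by omega, hzero (N + 1) (hP _ hN)⟩
    · exact ⟨N + 1, by omega, hzero N hN⟩

lemma circleOfDigits_halfDigits_notMem_statChar {f : ℝ → ℝ} {g : ℕ → ℝ}
    (hf : IsUnboundedModulus f) (hg : IsWeight g) (ha : IsArith a) (hP : ∀ n ∈ P, n + 1 ∉ P)
    (hPZ : P ∉ Zd f g) : circleOfDigits a (halfDigits a P) ∉ statChar f g (fun n => (a n : ℤ)) := by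
  intro hx
  refine hPZ (mem_Zd_of_preimage_add_mem hf hg (j := 1)
    (mem_Zd_of_subset hf hg (fun m hm => ?_) (hx (1 / 4) (by norm_num))))
  exact quarter_le_norm_zsmul_circleOfDigits ha (halfDigits_succ_le ha P) m
    (halfDigits_succ_of_mem hm) (halfDigits_succ_of_notMem (hP _ hm))

end HalfDigits

theorem stmt17 (f : ℝ → ℝ) (hf : IsUnboundedModulus f) (g : ℕ → ℝ) (hg : IsWeight g)
    (a : ℕ → ℕ) (ha : IsArith a) (B : Set ℕ) :
    (∃ (x : AddCircle (1 : ℝ)) (c : ℕ → ℕ), IsCanonRep a c x ∧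
        {n | c n ≠ 0} ⊆ B ∧ x ∉ statChar f g (fun n => (a n : ℤ))) ↔
      B ∉ Zd f g := by
  constructor
  · rintro ⟨x, c, ⟨-, hc, -, rfl⟩, hsupp, hx⟩ hB
    exact hx (mem_statChar_of_support_subset hf hg ha
      (fun n => by simpa using hc (n + 1) (by omega)) hsupp hB)
  · intro hB
    obtain ⟨P, hPB, hP, hPZ⟩ := exists_nonconsecutive_subset_notMem_Zd hf hg hB
    exact ⟨_, halfDigits a P, isCanonRep_halfDigits ha hP,
      (support_halfDigits_subset a P).trans hPB,
      circleOfDigits_halfDigits_notMem_statChar hf hg ha hP hPZ⟩
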